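/- arXiv:1906.06274 — 3 statements merged into one kernel-verified Lean document; each statement's English description precedes it below -/
import Mathlib

section
/- Let A be a cosimplicial abelian group and n ≥ 1. Define the matching object M^{n-1}A as the subgroup of (A^{n-1})^n consisting of tuples (a_0,...,a_{n-1}) satisfying s^i a_j = s^{j-1} a_i for i < j, and let s : A^n → M^{n-1}A be the map a ↦ (s^0 a, ..., s^{n-1} a). Then there exists a group homomorphism j : M^{n-1}A → A^n with s ∘ j = id, natural in A. -/
/-- A cosimplicial abelian group, given by abelian groups `A n` for `n : ℕ` together with
coface homomorphisms `d n i : A n →+ A (n+1)` (the map `d^i`, meaningful for `i ≤ n+1`) and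
codegeneracy homomorphisms `s n i : A (n+1) →+ A n` (the map `s^i`, meaningful for `i ≤ n`),
subject to the standard cosimplicial identities. -/
structure CosAb (A : ℕ → Type) [∀ n, AddCommGroup (A n)] : Type where
  d : ∀ n : ℕ, ℕ → (A n →+ A (n + 1))
  s : ∀ n : ℕ, ℕ → (A (n + 1) →+ A n)
  /-- `d^{j+1} ∘ d^i = d^i ∘ d^j` for `i ≤ j` (i.e. `d^j d^i = d^i d^{j-1}` for `i < j`). -/
  dd : ∀ n i j : ℕ, i ≤ j → j ≤ n + 1 →
    (d (n + 1) (j + 1)).comp (d n i) = (d (n + 1) i).comp (d n j)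
  /-- `s^i d^i = id`. -/
  sd_self : ∀ n i : ℕ, i ≤ n → (s n i).comp (d n i) = AddMonoidHom.id (A n)
  /-- `s^i d^{i+1} = id`. -/
  sd_succ : ∀ n i : ℕ, i ≤ n → (s n i).comp (d n (i + 1)) = AddMonoidHom.id (A n)
  /-- `s^{j+1} d^i = d^i s^j` for `i ≤ j` (i.e. `s^j d^i = d^i s^{j-1}` for `i < j`). -/
  sd_lt : ∀ n i j : ℕ, i ≤ j → j ≤ n →
    (s (n + 1) (j + 1)).comp (d (n + 1) i) = (d n i).comp (s n j)
  /-- `s^j d^i = d^{i-1} s^j` for `i > j + 1`. -/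
  sd_gt : ∀ n i j : ℕ, j + 1 < i → i ≤ n + 2 →
    (s (n + 1) j).comp (d (n + 1) i) = (d n (i - 1)).comp (s n j)
  /-- `s^j s^i = s^i s^{j+1}` for `i ≤ j`. -/
  ss : ∀ n i j : ℕ, i ≤ j → j ≤ n →
    (s n j).comp (s (n + 1) i) = (s n i).comp (s (n + 1) (j + 1))

/-- A morphism of cosimplicial abelian groups: a family of group homomorphisms commuting
with all cofaces and codegeneracies. -/
structure CosAbHom {A B : ℕ → Type} [∀ n, AddCommGroup (A n)] [∀ n, AddCommGroup (B n)]
    (C : CosAb A) (D : CosAb B) : Type where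
  f : ∀ n : ℕ, A n →+ B n
  comm_d : ∀ n i : ℕ, i ≤ n + 1 → (f (n + 1)).comp (C.d n i) = (D.d n i).comp (f n)
  comm_s : ∀ n i : ℕ, i ≤ n → (f n).comp (C.s n i) = (D.s n i).comp (f (n + 1))

/-- The matching condition on a tuple `(a_0, …, a_n)` of elements of `A^n` (the tuples making
up the matching object `M^{n-1}A` of the cosimplicial abelian group at level `n+1`):
`s^i a_j = s^{j-1} a_i` for `i < j`.  (When `n = 0` the condition is vacuous.) -/
def MatchTuple {A : ℕ → Type} [∀ n, AddCommGroup (A n)] (C : CosAb A) (n : ℕ)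
    (v : Fin (n + 1) → A n) : Prop :=
  ∀ (m : ℕ) (hm : n = m + 1) (i j : Fin (n + 1)), (i : ℕ) < (j : ℕ) →
    C.s m i (cast (congrArg A hm) (v j)) = C.s m ((j : ℕ) - 1) (cast (congrArg A hm) (v i))

/-- The matching object `M^{n-1}A` (at top level `n+1`), as a subgroup of `(A^n)^{n+1}`. -/
def Matching {A : ℕ → Type} [∀ n, AddCommGroup (A n)] (C : CosAb A) (n : ℕ) :
    AddSubgroup (Fin (n + 1) → A n) where
  carrier := { v | MatchTuple C n v }
  zero_mem' := by
    intro m hm i j hij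
    subst hm
    simp [cast_eq]
  add_mem' := by
    intro v w hv hw m hm i j hij
    subst hm
    have h1 := hv m rfl i j hij
    have h2 := hw m rfl i j hij
    simp only [cast_eq] at h1 h2 ⊢
    simp [Pi.add_apply, map_add, h1, h2]
  neg_mem' := by
    intro v hv m hm i j hij
    subst hm
    have h1 := hv m rfl i j hij
    simp only [cast_eq] at h1 ⊢
    simp [Pi.neg_apply, map_neg, h1]

open Fin.NatCast

/-- Auxiliary partial section: `secAux C n 0 = 0`,
`secAux C n (k+1) v = secAux C n k v + d^{k+1}(v_k - s^k (secAux C n k v))`. -/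
def secAux {A : ℕ → Type} [∀ n, AddCommGroup (A n)] (C : CosAb A) (n : ℕ) :
    ℕ → ((Fin (n + 1) → A n) →+ A (n + 1))
  | 0 => 0
  | k + 1 => secAux C n k +
      (C.d n (k + 1)).comp
        (Pi.evalAddMonoidHom (fun _ : Fin (n + 1) => A n) (k : Fin (n + 1)) -
          (C.s n k).comp (secAux C n k))

theorem secAux_spec {A : ℕ → Type} [∀ n, AddCommGroup (A n)] (C : CosAb A) (n : ℕ)
    (k : ℕ) (hk : k ≤ n + 1) (v : Fin (n + 1) → A n) (hv : MatchTuple C n v)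
    (i : Fin (n + 1)) (hi : (i : ℕ) < k) :
    C.s n i (secAux C n k v) = v i := by
  induction k with
  | zero => omega
  | succ k ih =>
    have hkn : k ≤ n := by omega
    have hkv : ((k : Fin (n + 1)) : ℕ) = k := Fin.val_cast_of_lt (by omega)
    rcases Nat.lt_or_ge (i : ℕ) k with h | h
    · -- case i < k
      obtain ⟨m, rfl⟩ : ∃ m, n = m + 1 := ⟨n - 1, by omega⟩
      simp only [secAux, AddMonoidHom.add_apply, AddMonoidHom.comp_apply, map_add]
      rw [ih (by omega) h]
      set x := (Pi.evalAddMonoidHom (fun _ : Fin (m + 1 + 1) => A (m + 1))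
          ((k : Fin (m + 1 + 1)))
          - (C.s (m + 1) k).comp (secAux C (m + 1) k)) v with hx
      have hsd := DFunLike.congr_fun (C.sd_gt m (k + 1) i (by omega) (by omega)) x
      simp only [AddMonoidHom.comp_apply] at hsd
      rw [hsd]
      have hx0 : C.s m i x = 0 := by
        have hmatch := hv m rfl i (k : Fin (m + 1 + 1)) (by omega)
        simp only [cast_eq, hkv] at hmatch
        have hss := DFunLike.congr_fun
          (C.ss m i (k - 1) (by omega) (by omega)) (secAux C (m + 1) k v)
        simp only [AddMonoidHom.comp_apply] at hss
        have hk1 : k - 1 + 1 = k := by omega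
        rw [hk1] at hss
        simp only [hx, AddMonoidHom.sub_apply, AddMonoidHom.comp_apply,
          Pi.evalAddMonoidHom_apply, map_sub]
        rw [hmatch, ← hss, ih (by omega) h, sub_self]
      rw [hx0, map_zero, add_zero]
    · -- case i = k
      have hik : (i : ℕ) = k := by omega
      have hieq : i = (k : Fin (n + 1)) := Fin.ext (by omega)
      simp only [secAux, AddMonoidHom.add_apply, AddMonoidHom.comp_apply, map_add, hik]
      set x := (Pi.evalAddMonoidHom (fun _ : Fin (n + 1) => A n) (k : Fin (n + 1))
          - (C.s n k).comp (secAux C n k)) v with hx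
      have hsd := DFunLike.congr_fun (C.sd_succ n k hkn) x
      simp only [AddMonoidHom.comp_apply, AddMonoidHom.id_apply] at hsd
      rw [hsd]
      simp only [hx, AddMonoidHom.sub_apply, AddMonoidHom.comp_apply,
        Pi.evalAddMonoidHom_apply]
      rw [hieq]
      abel

theorem secAux_natural {A B : ℕ → Type} [∀ n, AddCommGroup (A n)] [∀ n, AddCommGroup (B n)]
    (C : CosAb A) (D : CosAb B) (φ : CosAbHom C D) (n k : ℕ) (hk : k ≤ n + 1)
    (v : Fin (n + 1) → A n) (w : Fin (n + 1) → B n)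
    (hw : ∀ i : Fin (n + 1), w i = φ.f n (v i)) :
    φ.f (n + 1) (secAux C n k v) = secAux D n k w := by
  induction k with
  | zero => simp [secAux]
  | succ k ih =>
    have hkn : k ≤ n := by omega
    simp only [secAux, AddMonoidHom.add_apply, AddMonoidHom.comp_apply, map_add,
      AddMonoidHom.sub_apply, Pi.evalAddMonoidHom_apply]
    rw [ih (by omega)]
    congr 1
    have hd := DFunLike.congr_fun (φ.comm_d n (k + 1) (by omega))
      (v (k : Fin (n + 1)) - C.s n k (secAux C n k v))
    simp only [AddMonoidHom.comp_apply] at hd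
    rw [hd]
    congr 1
    rw [map_sub, hw, ← ih (by omega)]
    congr 1
    have hs := DFunLike.congr_fun (φ.comm_s n k hkn) (secAux C n k v)
    simp only [AddMonoidHom.comp_apply] at hs
    rw [hs]

/-- For every cosimplicial abelian group `A` and every `n ≥ 1` there is a group
homomorphism `j : M^{n-1}A → A^n` with `s ∘ j = id` (where
`s = (s^0, …, s^{n-1}) : A^n → M^{n-1}A` is the matching map), naturally in `A`.
(Here the matching object at level `n+1` is `Matching C n`, a subgroup of `(A^n)^{n+1}`,
and `s : A^{n+1} → M^n A` is `a ↦ (s^0 a, …, s^n a)`.) -/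
theorem matching_map_has_natural_section :
    ∃ j : ∀ (A : ℕ → Type) [∀ n, AddCommGroup (A n)] (C : CosAb A) (n : ℕ),
        (Matching C n →+ A (n + 1)),
      (∀ (A : ℕ → Type) [∀ n, AddCommGroup (A n)] (C : CosAb A) (n : ℕ)
          (v : Matching C n) (i : Fin (n + 1)),
          C.s n i (j A C n v) = v.1 i) ∧
      (∀ (A B : ℕ → Type) [∀ n, AddCommGroup (A n)] [∀ n, AddCommGroup (B n)]
          (C : CosAb A) (D : CosAb B) (φ : CosAbHom C D) (n : ℕ)
          (v : Matching C n) (w : Matching D n),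
          (∀ i : Fin (n + 1), w.1 i = φ.f n (v.1 i)) →
          φ.f (n + 1) (j A C n v) = j B D n w) := by
  refine ⟨fun A _ C n => (secAux C n (n + 1)).comp (Matching C n).subtype, ?_, ?_⟩
  · intro A _ C n v i
    exact secAux_spec C n (n + 1) le_rfl v.1 v.2 i i.isLt
  · intro A B _ _ C D φ n v w hw
    exact secAux_natural C D φ n (n + 1) le_rfl v.1 w.1 hw
end

section
/- Let U be a cosimplicial groupoid with each U^n a contractible groupoid, and let a ∈ Ob(U^0). For each n and each i ∈ [n], let i_* : U^0 → U^n be the functor induced by the ordinal map [0] → [n] picking out i. Then the assignments [n] → U^n sending i ↦ i_*(a) and (i ≤ j) to the unique morphism i_*(a) → j_*(a) define a map of cosimplicial categories Δ → U, and this construction gives a bijection between Ob(U^0) and the set of cosimplicial functors Δ → U. -/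
open CategoryTheory

/-- A groupoid is contractible if it is nonempty and there is exactly one morphism between
any two objects. -/
def IsContractibleGroupoid (C : Type*) [Category C] : Prop :=
  Nonempty C ∧ (∀ x y : C, Nonempty (x ⟶ y)) ∧ ∀ (x y : C) (f g : x ⟶ y), f = g

/-- A cosimplicial functor `Δ → U`: functors `[n] → U^n` for all `n`, compatible with all
ordinal maps `θ : [m] → [n]`. -/
structure CosFun (U : CategoryTheory.CosimplicialObject Grpd) where
  F : ∀ n : ℕ, Fin (n + 1) ⥤ U.obj (SimplexCategory.mk n)
  compat : ∀ {m n : ℕ} (θ : SimplexCategory.mk m ⟶ SimplexCategory.mk n),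
    F m ⋙ U.map θ = θ.toOrderHom.monotone.functor ⋙ F n

/-!
Functors into contractible groupoids are determined by their object maps, and any object map
extends to one. Compatibility with the vertex maps `[0] → [n]` forces a cosimplicial functor
`G` to send `i ∈ [n]` to `i_*` of its value `(G.F 0).obj 0` on `[0]`, and conversely the
assignment `i ↦ i_*(a)` is compatible with every ordinal map because `θ ∘ i = θ(i)`.
-/

namespace IsContractibleGroupoid

variable {C D : Type*} [Category C] [Category D]

noncomputable def functorOfObj (h : IsContractibleGroupoid C) (f : D → C) : D ⥤ C where
  obj := f
  map _ := (h.2.1 _ _).some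
  map_id _ := h.2.2 _ _ _ _
  map_comp _ _ := h.2.2 _ _ _ _

lemma functor_ext (h : IsContractibleGroupoid C) {F G : D ⥤ C}
    (hobj : ∀ d, F.obj d = G.obj d) : F = G :=
  CategoryTheory.Functor.ext hobj fun _ _ _ => h.2.2 _ _ _ _

end IsContractibleGroupoid

namespace CosFun

variable {U : CosimplicialObject Grpd}

@[ext]
lemma ext {G H : CosFun U} (h : G.F = H.F) : G = H := by
  cases G; cases H; cases h; rfl

lemma map_obj (G : CosFun U) {m n : ℕ} (θ : SimplexCategory.mk m ⟶ SimplexCategory.mk n)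
    (i : Fin (m + 1)) : (U.map θ).obj ((G.F m).obj i) = (G.F n).obj (θ.toOrderHom i) :=
  Functor.congr_obj (G.compat θ) i

lemma obj_eq_map_const_obj (G : CosFun U) (n : ℕ) (i : Fin (n + 1)) :
    (G.F n).obj i =
      (U.map (SimplexCategory.const (SimplexCategory.mk 0) (SimplexCategory.mk n) i)).obj
        ((G.F 0).obj 0) :=
  (G.map_obj (SimplexCategory.const _ _ i) 0).symm

lemma map_map_const_obj (a : U.obj (SimplexCategory.mk 0)) {m n : ℕ}
    (θ : SimplexCategory.mk m ⟶ SimplexCategory.mk n) (i : Fin (m + 1)) :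
    (U.map θ).obj
        ((U.map (SimplexCategory.const (SimplexCategory.mk 0) (SimplexCategory.mk m) i)).obj a) =
      (U.map (SimplexCategory.const (SimplexCategory.mk 0) (SimplexCategory.mk n)
        (θ.toOrderHom i))).obj a := by
  rw [← SimplexCategory.const_comp, U.map_comp]
  rfl

noncomputable def ofObj (hU : ∀ x : SimplexCategory, IsContractibleGroupoid (U.obj x))
    (a : U.obj (SimplexCategory.mk 0)) : CosFun U where
  F n := (hU _).functorOfObj fun i =>
    (U.map (SimplexCategory.const (SimplexCategory.mk 0) (SimplexCategory.mk n) i)).obj a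
  compat θ := (hU _).functor_ext fun i => map_map_const_obj a θ i

noncomputable def equivObjZero (hU : ∀ x : SimplexCategory, IsContractibleGroupoid (U.obj x)) :
    U.obj (SimplexCategory.mk 0) ≃ CosFun U where
  toFun := ofObj hU
  invFun G := (G.F 0).obj 0
  left_inv a := by
    change (U.map (SimplexCategory.const _ _ 0)).obj a = a
    rw [SimplexCategory.const_eq_id, U.map_id]
    rfl
  right_inv G := CosFun.ext <| funext fun n =>
    (hU _).functor_ext fun i => (G.obj_eq_map_const_obj n i).symm

end CosFun

/-- Let `U` be a cosimplicial groupoid with each `U^n` a contractible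
groupoid.  Sending `a ∈ Ob(U^0)` to the cosimplicial functor `Δ → U` whose component
`[n] → U^n` sends the vertex `i` to `i_*(a)` (where `i_* : U^0 → U^n` is induced by the
ordinal map `[0] → [n]` picking out `i`), and `i ≤ j` to the unique morphism
`i_*(a) → j_*(a)`, gives a bijection between `Ob(U^0)` and the set of cosimplicial
functors `Δ → U`. -/
theorem objects_level_zero_equiv_cosFun
    (U : CategoryTheory.CosimplicialObject Grpd)
    (hU : ∀ x : SimplexCategory, IsContractibleGroupoid (U.obj x)) :
    ∃ Φ : (U.obj (SimplexCategory.mk 0)) ≃ CosFun U,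
      ∀ (a : U.obj (SimplexCategory.mk 0)) (n : ℕ) (i : Fin (n + 1)),
        ((Φ a).F n).obj i =
          (U.map (SimplexCategory.const (SimplexCategory.mk 0) (SimplexCategory.mk n) i)).obj
            a :=
  ⟨CosFun.equivObjZero hU, fun _ _ _ => rfl⟩
end

section
/- Let G be a groupoid acting on a set, i.e. a functor F : G → Set from a groupoid G. If the nerve of the translation category (category of elements) E_G F is connected and simply connected (equivalently, weakly contractible), then for any object (v, x) of E_G F (v ∈ Ob(G), x ∈ F(v)), the natural transformation G(−, v) → F given by α ↦ F(α^{-1})(x) for a morphism α : w → v is an isomorphism of functors. -/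
open CategoryTheory

/-- The covariant functor `G(−, v)` on a groupoid `G`, with `w ↦ (w ⟶ v)`, where a morphism
`g : w ⟶ w'` acts by `α ↦ g⁻¹ ≫ α`. -/
def homToFunctor (G : Type) [Groupoid.{0} G] (v : G) : G ⥤ Type where
  obj w := w ⟶ v
  map {w w'} g := TypeCat.ofHom (fun α => Groupoid.inv g ≫ α)
  map_id w := by
    ext α
    simp [Groupoid.inv_eq_inv]
  map_comp {a b c} f g := by
    ext α
    simp [Groupoid.inv_eq_inv]

/-- Let `G` be a groupoid acting on a set, i.e. a functor `F : G ⥤ Type`.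
If the nerve of the translation category (category of elements) `E_G F` is connected and
simply connected (encoded: `F.Elements` is a connected category with trivial automorphism
groups), then for any object `(v, x)` of `E_G F` the natural transformation
`G(−, v) → F` sending `α : w ⟶ v` to `F(α⁻¹)(x)` is an isomorphism of functors. -/
theorem torsor_trivialization
    (G : Type) [Groupoid.{0} G] (F : G ⥤ Type)
    (hconn : IsConnected F.Elements)
    (hsimp : ∀ (e : F.Elements) (f : e ⟶ e), f = 𝟙 e)
    (v : G) (x : F.obj v) :
    ∃ τ : homToFunctor G v ⟶ F,
      (∀ (w : G) (α : (homToFunctor G v).obj w), τ.app w α = F.map (Groupoid.inv α) x) ∧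
      (∀ w : G, Function.Bijective (τ.app w)) := by
  refine ⟨⟨fun w => TypeCat.ofHom (fun α => F.map (Groupoid.inv α) x), ?_⟩, fun w α => rfl, ?_⟩
  · intro w w' g
    ext (α : w ⟶ v)
    show F.map (Groupoid.inv (Groupoid.inv g ≫ α)) x = F.map g (F.map (Groupoid.inv α) x)
    rw [← FunctorToTypes.map_comp_apply]
    simp [Groupoid.inv_eq_inv]
  · intro w
    constructor
    · -- injective
      intro (α : w ⟶ v) (β : w ⟶ v) h
      change F.map (Groupoid.inv α) x = F.map (Groupoid.inv β) x at h
      -- α, β : w ⟶ v with F.map (inv α) x = F.map (inv β) x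
      have hx : F.map α (F.map (Groupoid.inv α) x) = x := by
        rw [← FunctorToTypes.map_comp_apply]; simp [Groupoid.inv_eq_inv]
      have hy : F.map β (F.map (Groupoid.inv β) x) = x := by
        rw [← FunctorToTypes.map_comp_apply]; simp [Groupoid.inv_eq_inv]
      set y := F.map (Groupoid.inv α) x with hyd
      let e₁ : F.Elements := ⟨w, y⟩
      let e₂ : F.Elements := ⟨v, x⟩
      have hβ : F.map β y = x := by rw [h]; exact hy
      let fα : e₁ ⟶ e₂ := ⟨α, hx⟩
      let fβ : e₁ ⟶ e₂ := ⟨β, hβ⟩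
      have h1 := hsimp _ (fα ≫ Groupoid.inv fβ)
      have h2 : fα = fβ := by
        have := congrArg (· ≫ fβ) h1
        simpa using this
      exact congrArg Subtype.val h2
    · -- surjective
      intro y
      haveI := hconn
      let e₁ : F.Elements := ⟨w, y⟩
      let e₂ : F.Elements := ⟨v, x⟩
      obtain ⟨f⟩ := CategoryTheory.nonempty_hom_of_preconnected_groupoid e₁ e₂
      refine ⟨f.val, ?_⟩
      show F.map (Groupoid.inv f.val) x = y
      have hf : F.map f.val y = x := f.2
      rw [← hf, ← FunctorToTypes.map_comp_apply]
      simp [Groupoid.inv_eq_inv]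
end
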